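/- arXiv:1109.6259 — 2 statements merged into one kernel-verified Lean document; each statement's English description precedes it below -/
import Mathlib

section
/- Let K ∈ 𝔹^{n_u×n_y}, G ∈ 𝔹^{n_y×n_u} be Boolean matrices and n = min(n_y, n_u). Then for every r ∈ ℕ, K(GK)^r ≤ Σ_{s=0}^{n−1} K(GK)^s entrywise. -/
/-- Boolean (OR/AND semiring) matrix multiplication. -/
noncomputable def bmul {a b c : ℕ} (X : Matrix (Fin a) (Fin b) Bool) (Y : Matrix (Fin b) (Fin c) Bool) :
    Matrix (Fin a) (Fin c) Bool :=
  fun i k => Finset.univ.sup fun j => X i j && Y j k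

/-- Entrywise Boolean (OR) addition of matrices. -/
def badd {a b : ℕ} (X Y : Matrix (Fin a) (Fin b) Bool) : Matrix (Fin a) (Fin b) Bool :=
  fun i j => X i j || Y i j

/-- The sequence Z_0 = K, Z_{m+1} = Z_m + Z_m G Z_m. -/
noncomputable def Zseq {nu ny : ℕ} (K : Matrix (Fin nu) (Fin ny) Bool) (G : Matrix (Fin ny) (Fin nu) Bool) :
    ℕ → Matrix (Fin nu) (Fin ny) Bool
  | 0 => K
  | m + 1 => badd (Zseq K G m) (bmul (bmul (Zseq K G m) G) (Zseq K G m))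

/-- kterm K G s = K (G K)^s in the Boolean semiring. -/
noncomputable def kterm {nu ny : ℕ} (K : Matrix (Fin nu) (Fin ny) Bool) (G : Matrix (Fin ny) (Fin nu) Bool) :
    ℕ → Matrix (Fin nu) (Fin ny) Bool
  | 0 => K
  | s + 1 => bmul (kterm K G s) (bmul G K)

/-- Boolean (OR) sum of the matrices f 0, ..., f (N-1). -/
noncomputable def bsum {a b : ℕ} (N : ℕ) (f : ℕ → Matrix (Fin a) (Fin b) Bool) :
    Matrix (Fin a) (Fin b) Bool :=
  fun i j => (Finset.range N).sup fun s => f s i j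

/-- Number of nonzero (true) entries. -/
def ncount {a b : ℕ} (Z : Matrix (Fin a) (Fin b) Bool) : ℕ :=
  ∑ i : Fin a, ∑ j : Fin b, if Z i j then 1 else 0

/-!
Entrywise, `K (G K)^r` has a `true` at `(i, j)` exactly when there is an alternating walk
`i = u₀, y₀, u₁, y₁, …, u_r, y_r = j` with `K uₜ yₜ` and `G yₜ uₜ₊₁`. Its inputs form an `r`-step
chain of the relation `K G` on `Fin n_u`, its outputs an `r`-step chain of `G K` on `Fin n_y`.
A chain with at least as many steps as there are nodes repeats a node, and cutting out the loop
leaves a shorter chain; so the walk can be taken with fewer than `min n_y n_u` steps.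
-/

theorem Finset.sup_eq_true_iff {ι : Type*} {s : Finset ι} {f : ι → Bool} :
    s.sup f = true ↔ ∃ i ∈ s, f i = true := by
  induction s using Finset.cons_induction <;> simp_all

section RelChain

variable {α : Type*} (R : α → α → Prop)

def RelChain (r : ℕ) (x z : α) : Prop :=
  ∃ f : ℕ → α, f 0 = x ∧ f r = z ∧ ∀ t < r, R (f t) (f (t + 1))

variable {R}

theorem relChain_zero {x z : α} : RelChain R 0 x z ↔ x = z := by
  constructor
  · rintro ⟨f, rfl, rfl, -⟩
    rfl
  · rintro rfl
    exact ⟨fun _ => x, rfl, rfl, by simp⟩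

theorem relChain_succ {r : ℕ} {x z : α} :
    RelChain R (r + 1) x z ↔ ∃ y, RelChain R r x y ∧ R y z := by
  constructor
  · rintro ⟨f, hx, hz, hf⟩
    exact ⟨f r, ⟨f, hx, rfl, fun t ht => hf t (by omega)⟩, hz ▸ hf r (by omega)⟩
  · rintro ⟨y, ⟨f, hx, hy, hf⟩, hyz⟩
    refine ⟨fun t => if t ≤ r then f t else z, by simpa using hx, by simp, fun t ht => ?_⟩
    rcases Nat.lt_or_eq_of_le (Nat.le_of_lt_succ ht) with ht | rfl
    · simpa [ht.le, Nat.succ_le_of_lt ht] using hf t ht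
    · simpa [hy] using hyz

theorem RelChain.exists_shorter [Fintype α] {r : ℕ} {x z : α} (h : RelChain R r x z)
    (hr : Fintype.card α ≤ r) : ∃ s < r, RelChain R s x z := by
  obtain ⟨f, hx, hz, hf⟩ := h
  obtain ⟨a, b, hab, hbr, hfab⟩ : ∃ a b, a < b ∧ b ≤ r ∧ f a = f b := by
    obtain ⟨a, ha, b, hb, hne, hfab⟩ := Finset.exists_ne_map_eq_of_card_lt_of_maps_to
      (s := Finset.range (r + 1)) (t := Finset.univ) (by simpa using Nat.lt_succ_of_le hr)
      (fun _ _ => Finset.mem_univ _)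
    rw [Finset.mem_range] at ha hb
    rcases hne.lt_or_gt with hab | hba
    · exact ⟨a, b, hab, by omega, hfab⟩
    · exact ⟨b, a, hba, by omega, hfab.symm⟩
  refine ⟨r - (b - a), by omega, fun t => if t ≤ a then f t else f (t + (b - a)), by simpa using hx,
    ?_, fun t ht => ?_⟩
  · show (if r - (b - a) ≤ a then f (r - (b - a)) else f (r - (b - a) + (b - a))) = z
    split_ifs with hra
    · rwa [show r - (b - a) = a by omega, hfab, show b = r by omega]
    · rwa [show r - (b - a) + (b - a) = r by omega]
  · show R (if t ≤ a then f t else f (t + (b - a)))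
      (if t + 1 ≤ a then f (t + 1) else f (t + 1 + (b - a)))
    rcases lt_trichotomy t a with hta | rfl | hat
    · rw [if_pos hta.le, if_pos (Nat.succ_le_of_lt hta)]
      exact hf t (by omega)
    · rw [if_pos le_rfl, if_neg (by omega), hfab, show t + 1 + (b - t) = b + 1 by omega]
      exact hf b (by omega)
    · rw [if_neg (by omega), if_neg (by omega), show t + 1 + (b - a) = t + (b - a) + 1 by omega]
      exact hf _ (by omega)

theorem RelChain.exists_length_lt_card [Fintype α] {r : ℕ} {x z : α} (h : RelChain R r x z) :
    ∃ s < Fintype.card α, RelChain R s x z := by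
  induction r using Nat.strong_induction_on with
  | _ r ih =>
    by_cases hr : r < Fintype.card α
    · exact ⟨r, hr, h⟩
    · obtain ⟨s, hs, h'⟩ := h.exists_shorter (not_lt.mp hr)
      exact ih s hs h'

end RelChain

section Boolean

variable {a b c : ℕ}

theorem bmul_apply_eq_true {X : Matrix (Fin a) (Fin b) Bool} {Y : Matrix (Fin b) (Fin c) Bool}
    {i : Fin a} {k : Fin c} : bmul X Y i k = true ↔ ∃ j, X i j = true ∧ Y j k = true := by
  simp [bmul, Finset.sup_eq_true_iff]

theorem bsum_apply_eq_true {N : ℕ} {f : ℕ → Matrix (Fin a) (Fin b) Bool} {i : Fin a} {j : Fin b} :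
    bsum N f i j = true ↔ ∃ s < N, f s i j = true := by
  simp [bsum, Finset.sup_eq_true_iff]

end Boolean

section kterm

variable {nu ny : ℕ} (K : Matrix (Fin nu) (Fin ny) Bool) (G : Matrix (Fin ny) (Fin nu) Bool)

def stepKG (u u' : Fin nu) : Prop := ∃ y, K u y = true ∧ G y u' = true

def stepGK (y y' : Fin ny) : Prop := ∃ u, G y u = true ∧ K u y' = true

variable {K G}

theorem kterm_succ_apply_eq_true {r : ℕ} {i : Fin nu} {j : Fin ny} :
    kterm K G (r + 1) i j = true ↔
      ∃ y u, kterm K G r i y = true ∧ G y u = true ∧ K u j = true := by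
  simp only [kterm, bmul_apply_eq_true, exists_and_left]

theorem kterm_eq_true_iff_relChain_stepKG {r : ℕ} {i : Fin nu} {j : Fin ny} :
    kterm K G r i j = true ↔ ∃ u, RelChain (stepKG K G) r i u ∧ K u j = true := by
  induction r generalizing j with
  | zero => simp [kterm, relChain_zero]
  | succ r ih =>
    simp only [kterm_succ_apply_eq_true, ih, relChain_succ, stepKG]
    aesop

theorem kterm_eq_true_iff_relChain_stepGK {r : ℕ} {i : Fin nu} {j : Fin ny} :
    kterm K G r i j = true ↔ ∃ y, K i y = true ∧ RelChain (stepGK K G) r y j := by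
  induction r generalizing j with
  | zero => simp [kterm, relChain_zero]
  | succ r ih =>
    simp only [kterm_succ_apply_eq_true, ih, relChain_succ, stepGK]
    aesop

theorem kterm_exists_lt_min_of_eq_true {r : ℕ} {i : Fin nu} {j : Fin ny}
    (h : kterm K G r i j = true) : ∃ s < min ny nu, kterm K G s i j = true := by
  rcases le_total ny nu with hle | hle
  · obtain ⟨y, hiy, hy⟩ := kterm_eq_true_iff_relChain_stepGK.mp h
    obtain ⟨s, hs, hy'⟩ := hy.exists_length_lt_card
    exact ⟨s, by simpa [hle] using hs, kterm_eq_true_iff_relChain_stepGK.mpr ⟨y, hiy, hy'⟩⟩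
  · obtain ⟨u, hu, huj⟩ := kterm_eq_true_iff_relChain_stepKG.mp h
    obtain ⟨s, hs, hu'⟩ := hu.exists_length_lt_card
    exact ⟨s, by simpa [hle] using hs, kterm_eq_true_iff_relChain_stepKG.mpr ⟨u, hu', huj⟩⟩

end kterm

theorem stmt4 {nu ny : ℕ} (K : Matrix (Fin nu) (Fin ny) Bool)
    (G : Matrix (Fin ny) (Fin nu) Bool) :
    ∀ (r : ℕ) (i : Fin nu) (j : Fin ny),
      kterm K G r i j ≤ bsum (min ny nu) (kterm K G) i j := by
  intro r i j
  cases h : kterm K G r i j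
  · exact Bool.false_le _
  · exact (bsum_apply_eq_true.mpr (kterm_exists_lt_min_of_eq_true h)).ge
end

section
/- Let K ∈ 𝔹^{n_u×n_y}, G ∈ 𝔹^{n_y×n_u}, n = min(n_u, n_y), m* = ⌈log₂ n⌉, and define Z_0 = K, Z_{m+1} = Z_m + Z_m G Z_m. Then Z_{m*} is the unique minimizer of the number of nonzero entries N(Z) over all Z ∈ 𝔹^{n_u×n_y} satisfying Z G Z ≤ Z and K ≤ Z; equivalently, Z_{m*} ≤ Z for every such Z, and Z_{m*} itself satisfies both constraints. -/
/-! Z_m is the union of the terms K (G K)^s with s < 2^m, since Z_m G Z_m contributes exactly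
the terms K (G K)^(s+t+1) with s, t < 2^m. The entry (i, j) of K (G K)^s records a chain
i = u₀ → u₁ → ⋯ → u_s with K u_s j, where u → v means (K G) u v; if s ≥ n_u, two of the u_r
coincide and the loop between them can be cut out, and transposing gives the same for n_y.
Since n ≤ 2^m*, Z_{m*} is therefore the union of all the terms, which is closed under
Z ↦ Z G Z; conversely every Z with K ≤ Z and Z G Z ≤ Z contains every Z_m. -/

open scoped Matrix

section BoolMatrix

variable {a b c d : ℕ}

theorem bmul_eq_true_iff (X : Matrix (Fin a) (Fin b) Bool) (Y : Matrix (Fin b) (Fin c) Bool)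
    (i : Fin a) (k : Fin c) : bmul X Y i k = true ↔ ∃ j, X i j = true ∧ Y j k = true :=
  calc bmul X Y i k = true ↔ ⊤ ≤ bmul X Y i k := top_le_iff.symm
    _ ↔ ∃ j ∈ Finset.univ, ⊤ ≤ (X i j && Y j k) := Finset.le_sup_iff bot_lt_top
    _ ↔ _ := by simp [Bool.le_iff_imp]

theorem bmul_assoc (X : Matrix (Fin a) (Fin b) Bool) (Y : Matrix (Fin b) (Fin c) Bool)
    (Z : Matrix (Fin c) (Fin d) Bool) : bmul (bmul X Y) Z = bmul X (bmul Y Z) := by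
  funext i l
  rw [Bool.eq_iff_iff]
  simp only [bmul_eq_true_iff]
  exact ⟨fun ⟨k, ⟨j, hX, hY⟩, hZ⟩ => ⟨j, hX, k, hY, hZ⟩,
    fun ⟨j, hX, k, hY, hZ⟩ => ⟨k, ⟨j, hX, hY⟩, hZ⟩⟩

theorem transpose_bmul (X : Matrix (Fin a) (Fin b) Bool) (Y : Matrix (Fin b) (Fin c) Bool) :
    (bmul X Y)ᵀ = bmul Yᵀ Xᵀ := by
  funext k i
  simp only [Matrix.transpose_apply, bmul, Bool.and_comm]

def entrySupport (Z : Matrix (Fin a) (Fin b) Bool) : Finset (Fin a × Fin b) :=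
  {p | Z p.1 p.2 = true}

theorem ncount_eq_card_entrySupport (Z : Matrix (Fin a) (Fin b) Bool) :
    ncount Z = (entrySupport Z).card := by
  rw [entrySupport, Finset.card_filter]
  exact (Fintype.sum_prod_type' fun i j => if Z i j = true then 1 else 0).symm

theorem entrySupport_subset {Z W : Matrix (Fin a) (Fin b) Bool} (h : ∀ i j, Z i j ≤ W i j) :
    entrySupport Z ⊆ entrySupport W := by
  intro p
  simpa [entrySupport] using Bool.le_iff_imp.1 (h p.1 p.2)

theorem ncount_le_ncount {Z W : Matrix (Fin a) (Fin b) Bool} (h : ∀ i j, Z i j ≤ W i j) :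
    ncount Z ≤ ncount W := by
  simpa only [ncount_eq_card_entrySupport] using Finset.card_le_card (entrySupport_subset h)

theorem eq_of_le_of_ncount_eq {Z W : Matrix (Fin a) (Fin b) Bool} (h : ∀ i j, Z i j ≤ W i j)
    (hc : ncount W = ncount Z) : W = Z := by
  have hsupp : entrySupport Z = entrySupport W :=
    Finset.eq_of_subset_of_card_le (entrySupport_subset h)
      (by rw [← ncount_eq_card_entrySupport, ← ncount_eq_card_entrySupport, hc])
  funext i j
  rw [Bool.eq_iff_iff]
  simpa [entrySupport] using (Finset.ext_iff.1 hsupp (i, j)).symm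

end BoolMatrix

section ReachesIn

variable {α : Type*} (r : α → α → Prop)

def ReachesIn (s : ℕ) (x z : α) : Prop :=
  ∃ p : ℕ → α, p 0 = x ∧ p s = z ∧ ∀ k < s, r (p k) (p (k + 1))

variable {r}

theorem reachesIn_zero {x z : α} : ReachesIn r 0 x z ↔ x = z :=
  ⟨fun ⟨_, hx, hz, _⟩ => hx ▸ hz,
    fun h => ⟨fun _ => x, rfl, h, fun k hk => absurd hk (Nat.not_lt_zero k)⟩⟩

theorem reachesIn_succ {s : ℕ} {x z : α} :
    ReachesIn r (s + 1) x z ↔ ∃ y, r x y ∧ ReachesIn r s y z := by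
  constructor
  · rintro ⟨p, hx, hz, hstep⟩
    exact ⟨p 1, hx ▸ hstep 0 s.succ_pos, fun k => p (k + 1), rfl, hz,
      fun k hk => hstep (k + 1) (by omega)⟩
  · rintro ⟨y, hxy, p, hy, hz, hstep⟩
    refine ⟨fun | 0 => x | k + 1 => p k, rfl, hz, ?_⟩
    rintro (_ | k) hk
    · show r x (p 0)
      rw [hy]
      exact hxy
    · exact hstep k (by omega)

theorem ReachesIn.exists_lt_of_card_le [Fintype α] {s : ℕ} {x z : α}
    (hs : Fintype.card α ≤ s) (h : ReachesIn r s x z) : ∃ s' < s, ReachesIn r s' x z := by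
  obtain ⟨p, hx, hz, hstep⟩ := h
  obtain ⟨i, hi, j, hj, hij, hp⟩ := Finset.exists_ne_map_eq_of_card_lt_of_maps_to
    (s := Finset.range (s + 1)) (t := Finset.univ) (f := p) (by simpa using Nat.lt_succ_of_le hs)
    (fun _ _ => Finset.mem_univ _)
  wlog hlt : i < j generalizing i j
  · exact this j hj i hi hij.symm hp.symm (by omega)
  simp only [Finset.mem_range] at hi hj
  refine ⟨s - (j - i), by omega, fun k => if k < i then p k else p (k + (j - i)), ?_, ?_, ?_⟩
  · dsimp only
    split_ifs with h0
    · exact hx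
    · rw [← hx, show 0 + (j - i) = j by omega, ← hp, show i = 0 by omega]
  · dsimp only
    rw [if_neg (by omega), ← hz, show s - (j - i) + (j - i) = s by omega]
  · intro k hk
    dsimp only
    split_ifs with h1 h2 h2
    · exact hstep k (by omega)
    · rw [show k + 1 + (j - i) = j by omega, ← hp, show i = k + 1 by omega]
      exact hstep k (by omega)
    · omega
    · rw [show k + 1 + (j - i) = k + (j - i) + 1 by omega]
      exact hstep _ (by omega)

theorem ReachesIn.exists_lt_card [Fintype α] {s : ℕ} {x z : α} (h : ReachesIn r s x z) :
    ∃ s' < Fintype.card α, ReachesIn r s' x z := by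
  induction s using Nat.strong_induction_on with
  | _ s ih =>
    by_cases hs : s < Fintype.card α
    · exact ⟨s, hs, h⟩
    · obtain ⟨s', hs', h'⟩ := h.exists_lt_of_card_le (not_lt.1 hs)
      exact ih s' hs' h'

end ReachesIn

section Kterm

variable {nu ny : ℕ} (K : Matrix (Fin nu) (Fin ny) Bool) (G : Matrix (Fin ny) (Fin nu) Bool)

theorem kterm_add_succ (s t : ℕ) :
    kterm K G (s + t + 1) = bmul (bmul (kterm K G s) G) (kterm K G t) := by
  induction t with
  | zero => exact (bmul_assoc _ _ _).symm
  | succ t ih =>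
    change bmul (kterm K G (s + t + 1)) (bmul G K) = _
    rw [ih, bmul_assoc]
    rfl

theorem kterm_succ' (t : ℕ) : kterm K G (t + 1) = bmul (bmul K G) (kterm K G t) := by
  have h := kterm_add_succ K G 0 t
  rwa [zero_add] at h

theorem kterm_add_succ_eq_true_iff (s t : ℕ) (i : Fin nu) (j : Fin ny) :
    kterm K G (s + t + 1) i j = true ↔
      ∃ y k, kterm K G s i y = true ∧ G y k = true ∧ kterm K G t k j = true := by
  simp only [kterm_add_succ, bmul_eq_true_iff]
  exact ⟨fun ⟨k, ⟨y, hs, hG⟩, ht⟩ => ⟨y, k, hs, hG, ht⟩,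
    fun ⟨y, k, hs, hG, ht⟩ => ⟨k, ⟨y, hs, hG⟩, ht⟩⟩

theorem kterm_transpose (s : ℕ) : kterm Kᵀ Gᵀ s = (kterm K G s)ᵀ := by
  induction s with
  | zero => rfl
  | succ s ih =>
    change bmul (kterm Kᵀ Gᵀ s) (bmul Gᵀ Kᵀ) = _
    rw [kterm_succ', transpose_bmul, transpose_bmul, ih]

theorem kterm_eq_true_iff (s : ℕ) (i : Fin nu) (j : Fin ny) :
    kterm K G s i j = true ↔
      ∃ u, ReachesIn (fun u v => bmul K G u v = true) s i u ∧ K u j = true := by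
  induction s generalizing i with
  | zero => simp [reachesIn_zero, kterm]
  | succ s ih =>
    rw [kterm_succ', bmul_eq_true_iff]
    simp only [ih, reachesIn_succ]
    exact ⟨fun ⟨v, hiv, u, hvu, hu⟩ => ⟨u, ⟨v, hiv, hvu⟩, hu⟩,
      fun ⟨u, ⟨v, hiv, hvu⟩, hu⟩ => ⟨v, hiv, u, hvu, hu⟩⟩

theorem exists_kterm_lt_left {s : ℕ} {i : Fin nu} {j : Fin ny} (h : kterm K G s i j = true) :
    ∃ s' < nu, kterm K G s' i j = true := by
  obtain ⟨u, hreach, hu⟩ := (kterm_eq_true_iff K G s i j).1 h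
  obtain ⟨s', hs', hreach'⟩ := hreach.exists_lt_card
  exact ⟨s', by simpa using hs', (kterm_eq_true_iff K G s' i j).2 ⟨u, hreach', hu⟩⟩

theorem exists_kterm_lt_min {s : ℕ} {i : Fin nu} {j : Fin ny} (h : kterm K G s i j = true) :
    ∃ s' < min nu ny, kterm K G s' i j = true := by
  obtain ⟨s₁, hs₁, h₁⟩ := exists_kterm_lt_left K G h
  obtain ⟨s₂, hs₂, h₂⟩ := exists_kterm_lt_left Kᵀ Gᵀ (s := s) (i := j) (j := i)
    (by rwa [kterm_transpose])
  rw [kterm_transpose] at h₂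
  rcases le_total nu ny with hle | hle
  · exact ⟨s₁, by omega, h₁⟩
  · exact ⟨s₂, by omega, h₂⟩

end Kterm

section Zseq

variable {nu ny : ℕ} (K : Matrix (Fin nu) (Fin ny) Bool) (G : Matrix (Fin ny) (Fin nu) Bool)

theorem Zseq_succ_eq_true_iff (m : ℕ) (i : Fin nu) (j : Fin ny) :
    Zseq K G (m + 1) i j = true ↔ Zseq K G m i j = true ∨
      ∃ y k, Zseq K G m i y = true ∧ G y k = true ∧ Zseq K G m k j = true := by
  simp only [Zseq, badd, Bool.or_eq_true, bmul_eq_true_iff]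
  refine or_congr Iff.rfl ⟨fun ⟨k, ⟨y, hs, hG⟩, ht⟩ => ⟨y, k, hs, hG, ht⟩,
    fun ⟨y, k, hs, hG, ht⟩ => ⟨k, ⟨y, hs, hG⟩, ht⟩⟩

theorem Zseq_eq_true_iff (m : ℕ) (i : Fin nu) (j : Fin ny) :
    Zseq K G m i j = true ↔ ∃ s < 2 ^ m, kterm K G s i j = true := by
  induction m generalizing i j with
  | zero => simp [Zseq, kterm]
  | succ m ih =>
    rw [Zseq_succ_eq_true_iff, pow_succ]
    simp only [ih]
    constructor
    · rintro (⟨s, hs, h⟩ | ⟨y, k, ⟨s, hs, hsy⟩, hG, ⟨t, ht, htk⟩⟩)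
      · exact ⟨s, by omega, h⟩
      · exact ⟨s + t + 1, by omega,
          (kterm_add_succ_eq_true_iff K G s t i j).2 ⟨y, k, hsy, hG, htk⟩⟩
    · rintro ⟨s, hs, h⟩
      by_cases hsm : s < 2 ^ m
      · exact Or.inl ⟨s, hsm, h⟩
      · obtain ⟨t, rfl⟩ : ∃ t, s = (2 ^ m - 1) + t + 1 := ⟨s - 2 ^ m, by omega⟩
        obtain ⟨y, k, hsy, hG, htk⟩ := (kterm_add_succ_eq_true_iff K G _ t i j).1 h
        exact Or.inr ⟨y, k, ⟨_, by omega, hsy⟩, hG, ⟨t, by omega, htk⟩⟩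

theorem Zseq_eq_true_iff_exists_kterm {M : ℕ} (hM : min nu ny ≤ 2 ^ M)
    (i : Fin nu) (j : Fin ny) :
    Zseq K G M i j = true ↔ ∃ s, kterm K G s i j = true := by
  rw [Zseq_eq_true_iff]
  refine ⟨fun ⟨s, _, h⟩ => ⟨s, h⟩, fun ⟨s, h⟩ => ?_⟩
  obtain ⟨s', hs', h'⟩ := exists_kterm_lt_min K G h
  exact ⟨s', by omega, h'⟩

theorem K_le_Zseq (m : ℕ) (i : Fin nu) (j : Fin ny) : K i j ≤ Zseq K G m i j := by
  rw [Bool.le_iff_imp, Zseq_eq_true_iff]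
  exact fun h => ⟨0, by positivity, h⟩

theorem Zseq_quad_le {M : ℕ} (hM : min nu ny ≤ 2 ^ M) (i : Fin nu) (j : Fin ny) :
    bmul (bmul (Zseq K G M) G) (Zseq K G M) i j ≤ Zseq K G M i j := by
  rw [Bool.le_iff_imp]
  simp only [bmul_eq_true_iff, Zseq_eq_true_iff_exists_kterm K G hM]
  rintro ⟨k, ⟨y, ⟨s, hs⟩, hG⟩, ⟨t, ht⟩⟩
  exact ⟨s + t + 1, (kterm_add_succ_eq_true_iff K G s t i j).2 ⟨y, k, hs, hG, ht⟩⟩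

theorem Zseq_le_of_quad_le {Z : Matrix (Fin nu) (Fin ny) Bool}
    (hZ : ∀ i j, bmul (bmul Z G) Z i j ≤ Z i j) (hK : ∀ i j, K i j ≤ Z i j) (m : ℕ) :
    ∀ i j, Zseq K G m i j ≤ Z i j := by
  induction m with
  | zero => exact hK
  | succ m ih =>
    intro i j
    rw [Bool.le_iff_imp, Zseq_succ_eq_true_iff]
    rintro (h | ⟨y, k, hiy, hG, hkj⟩)
    · exact Bool.le_iff_imp.1 (ih i j) h
    · refine Bool.le_iff_imp.1 (hZ i j) ((bmul_eq_true_iff _ _ _ _).2 ⟨k, ?_, ?_⟩)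
      · exact (bmul_eq_true_iff _ _ _ _).2 ⟨y, Bool.le_iff_imp.1 (ih i y) hiy, hG⟩
      · exact Bool.le_iff_imp.1 (ih k j) hkj

end Zseq

theorem stmt7_general {nu ny : ℕ} (K : Matrix (Fin nu) (Fin ny) Bool)
    (G : Matrix (Fin ny) (Fin nu) Bool) :
    (∀ i j, bmul (bmul (Zseq K G (Nat.clog 2 (min nu ny))) G)
        (Zseq K G (Nat.clog 2 (min nu ny))) i j ≤ Zseq K G (Nat.clog 2 (min nu ny)) i j) ∧
    (∀ i j, K i j ≤ Zseq K G (Nat.clog 2 (min nu ny)) i j) ∧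
    (∀ Z : Matrix (Fin nu) (Fin ny) Bool,
      (∀ i j, bmul (bmul Z G) Z i j ≤ Z i j) → (∀ i j, K i j ≤ Z i j) →
      (∀ i j, Zseq K G (Nat.clog 2 (min nu ny)) i j ≤ Z i j) ∧
      ncount (Zseq K G (Nat.clog 2 (min nu ny))) ≤ ncount Z ∧
      (ncount Z = ncount (Zseq K G (Nat.clog 2 (min nu ny))) →
        Z = Zseq K G (Nat.clog 2 (min nu ny)))) := by
  have hM : min nu ny ≤ 2 ^ Nat.clog 2 (min nu ny) := Nat.le_pow_clog one_lt_two _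
  refine ⟨Zseq_quad_le K G hM, K_le_Zseq K G _, fun Z hZ hK => ?_⟩
  have hle := Zseq_le_of_quad_le K G hZ hK (Nat.clog 2 (min nu ny))
  exact ⟨hle, ncount_le_ncount hle, eq_of_le_of_ncount_eq hle⟩

theorem stmt7 {nu ny : ℕ} (K : Matrix (Fin nu) (Fin ny) Bool)
    (G : Matrix (Fin ny) (Fin nu) Bool) (hn : 1 ≤ min nu ny) :
    (∀ i j, bmul (bmul (Zseq K G (Nat.clog 2 (min nu ny))) G)
        (Zseq K G (Nat.clog 2 (min nu ny))) i j ≤ Zseq K G (Nat.clog 2 (min nu ny)) i j) ∧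
    (∀ i j, K i j ≤ Zseq K G (Nat.clog 2 (min nu ny)) i j) ∧
    (∀ Z : Matrix (Fin nu) (Fin ny) Bool,
      (∀ i j, bmul (bmul Z G) Z i j ≤ Z i j) → (∀ i j, K i j ≤ Z i j) →
      (∀ i j, Zseq K G (Nat.clog 2 (min nu ny)) i j ≤ Z i j) ∧
      ncount (Zseq K G (Nat.clog 2 (min nu ny))) ≤ ncount Z ∧
      (ncount Z = ncount (Zseq K G (Nat.clog 2 (min nu ny))) →
        Z = Zseq K G (Nat.clog 2 (min nu ny)))) :=
  stmt7_general K G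
end
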